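/- For every symmetric function f : {0,1}^n → {-1,1} with n ≥ 1, log₂ ‖f^‖₁ ≤ 2·r(f)·log₂(n/r(f)) + 3, where ‖f^‖₁ = Σ_{S⊆[n]} |f^(S)| is the spectral norm (assuming r(f) ≥ 1). -/

import Mathlib

open Finset

def wt {n : ℕ} (x : Fin n → ZMod 2) : ℕ := ∑ i, (x i).val

noncomputable def fhat {n : ℕ} (f : (Fin n → ZMod 2) → ℝ) (S : Finset (Fin n)) : ℝ :=
  (∑ x : Fin n → ZMod 2, f x * (-1 : ℝ) ^ (∑ i ∈ S, (x i).val)) / 2 ^ n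

/-- `f` or `f · parity` is constant on the band of inputs with `r₀ ≤ |x| ≤ n - r₁`. -/
def BandConst {n : ℕ} (f : (Fin n → ZMod 2) → ℝ) (r₀ r₁ : ℕ) : Prop :=
  (∃ c : ℝ, ∀ x, r₀ ≤ wt x → wt x + r₁ ≤ n → f x = c) ∨
  (∃ c : ℝ, ∀ x, r₀ ≤ wt x → wt x + r₁ ≤ n → f x * (-1 : ℝ) ^ wt x = c)

lemma val_le_one (b : ZMod 2) : b.val ≤ 1 := Nat.lt_succ_iff.mp (ZMod.val_lt b)

lemma wt_le {n : ℕ} (x : Fin n → ZMod 2) : wt x ≤ n := by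
  calc wt x ≤ ∑ _i : Fin n, 1 := Finset.sum_le_sum fun i _ => val_le_one _
    _ = n := by simp

lemma sum_one_sub {n : ℕ} (x : Fin n → ZMod 2) :
    ∑ i, (1 - (x i).val) = n - wt x := by
  have h : (∑ i, (1 - (x i).val)) + wt x = n := by
    rw [wt, ← Finset.sum_add_distrib]
    have h1 : ∀ i : Fin n, 1 - (x i).val + (x i).val = 1 := fun i => by
      have := val_le_one (x i); omega
    rw [Finset.sum_congr rfl fun i _ => h1 i]; simp
  omega

lemma sum_prod_w {n : ℕ} (w : Fin n → ZMod 2 → ℝ) :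
    ∑ x : Fin n → ZMod 2, ∏ i, w i (x i) = ∏ i, (w i 0 + w i 1) := by
  rw [← Fintype.prod_sum]
  exact Finset.prod_congr rfl fun i _ => Fin.sum_univ_two (w i)

lemma char_expand {n : ℕ} (S : Finset (Fin n)) (x : Fin n → ZMod 2) :
    (-1 : ℝ) ^ (∑ i ∈ S, (x i).val) = ∏ i, (if i ∈ S then (-1 : ℝ) ^ (x i).val else 1) := by
  rw [← Finset.prod_pow_eq_pow_sum,
    Finset.prod_ite_mem Finset.univ S fun i => (-1:ℝ) ^ (x i).val, Finset.univ_inter]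

lemma fhat_const {n : ℕ} (c : ℝ) (S : Finset (Fin n)) :
    fhat (fun _ => c) S = if S = ∅ then c else 0 := by
  unfold fhat
  have h : ∀ x : Fin n → ZMod 2, c * (-1 : ℝ) ^ (∑ i ∈ S, (x i).val)
      = c * ∏ i, (if i ∈ S then (-1 : ℝ) ^ (x i).val else 1) := by
    intro x; rw [char_expand]
  rw [Finset.sum_congr rfl fun x _ => h x, ← Finset.mul_sum,
    sum_prod_w (fun i b => if i ∈ S then (-1 : ℝ) ^ b.val else 1)]
  have h2 : ∀ i : Fin n, ((if i ∈ S then (-1 : ℝ) ^ (0 : ZMod 2).val else 1)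
      + (if i ∈ S then (-1 : ℝ) ^ (1 : ZMod 2).val else 1)) = if i ∈ S then 0 else 2 := by
    intro i; by_cases hi : i ∈ S <;> simp [hi, ZMod.val_one] <;> norm_num
  rw [Finset.prod_congr rfl fun i _ => h2 i]
  by_cases hS : S = ∅
  · simp [hS]
  · obtain ⟨i, hi⟩ := Finset.nonempty_iff_ne_empty.mpr hS
    rw [Finset.prod_eq_zero (Finset.mem_univ i) (by simp [hi])]
    simp [hS]

lemma fhat_parity {n : ℕ} (c : ℝ) (S : Finset (Fin n)) :
    fhat (fun x => c * (-1 : ℝ) ^ wt x) S = if S = Finset.univ then c else 0 := by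
  unfold fhat
  have h : ∀ x : Fin n → ZMod 2, (c * (-1 : ℝ) ^ wt x) * (-1 : ℝ) ^ (∑ i ∈ S, (x i).val)
      = c * ∏ i, ((-1 : ℝ) ^ (x i).val * (if i ∈ S then (-1 : ℝ) ^ (x i).val else 1)) := by
    intro x
    rw [Finset.prod_mul_distrib, char_expand, wt, ← Finset.prod_pow_eq_pow_sum]
    ring
  rw [Finset.sum_congr rfl fun x _ => h x, ← Finset.mul_sum,
    sum_prod_w (fun i b => (-1 : ℝ) ^ b.val * (if i ∈ S then (-1 : ℝ) ^ b.val else 1))]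
  have h2 : ∀ i : Fin n, ((-1 : ℝ) ^ (0 : ZMod 2).val * (if i ∈ S then (-1 : ℝ) ^ (0 : ZMod 2).val else 1)
      + (-1 : ℝ) ^ (1 : ZMod 2).val * (if i ∈ S then (-1 : ℝ) ^ (1 : ZMod 2).val else 1))
      = if i ∈ S then 2 else 0 := by
    intro i; by_cases hi : i ∈ S <;> simp [hi, ZMod.val_one] <;> norm_num
  rw [Finset.prod_congr rfl fun i _ => h2 i]
  by_cases hS : S = Finset.univ
  · simp [hS]
  · obtain ⟨i, hi⟩ : ∃ i, i ∉ S := by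
      by_contra hcon; push_neg at hcon; exact hS (Finset.eq_univ_iff_forall.mpr hcon)
    rw [Finset.prod_eq_zero (Finset.mem_univ i) (by simp [hi])]
    simp [hS]

lemma key0 (a r : ℕ) (hr : 1 ≤ r) :
    ((a:ℝ) + 2*r) ^ a * (r : ℝ) ^ r ≤ ((a:ℝ) + r) ^ (a + r) := by
  have hr' : (1:ℝ) ≤ (r:ℝ) := by exact_mod_cast hr
  have hM0 : (0:ℝ) < (a:ℝ) + r := by positivity
  have hA : (0:ℝ) ≤ (a:ℝ) + 2*r := by positivity
  have hw : (a:ℝ)/((a:ℝ)+r) + (r:ℝ)/((a:ℝ)+r) = 1 := by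
    field_simp
  have h1 : ((a:ℝ) + 2*r) ^ ((a:ℝ)/((a:ℝ)+r)) * (r:ℝ) ^ ((r:ℝ)/((a:ℝ)+r)) ≤ (a:ℝ)+r := by
    refine (Real.geom_mean_le_arith_mean2_weighted (by positivity) (by positivity) hA
      (Nat.cast_nonneg r) hw).trans_eq ?_
    field_simp
    ring
  have h2 := Real.rpow_le_rpow (by positivity) h1 hM0.le
  rw [Real.mul_rpow (Real.rpow_nonneg hA _) (Real.rpow_nonneg (Nat.cast_nonneg r) _),
    ← Real.rpow_mul hA, ← Real.rpow_mul (Nat.cast_nonneg r),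
    div_mul_cancel₀ _ (ne_of_gt hM0), div_mul_cancel₀ _ (ne_of_gt hM0)] at h2
  rw [← Real.rpow_natCast ((a:ℝ)+2*r) a, ← Real.rpow_natCast (r:ℝ) r,
    ← Real.rpow_natCast ((a:ℝ)+r) (a+r), Nat.cast_add]
  exact h2

lemma key1 {n r : ℕ} (hr : 1 ≤ r) (h2r : 2*r ≤ n) :
    ((r:ℝ)/n) ^ r ≤ (1 - (r:ℝ)/n) ^ (n - r) := by
  have hn0 : (0:ℝ) < n := by
    have : 0 < n := by omega
    exact_mod_cast this
  obtain ⟨a, rfl⟩ : ∃ a, n = a + 2*r := ⟨n - 2*r, by omega⟩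
  have e1 : 1 - (r:ℝ)/((a + 2*r : ℕ):ℝ) = ((a:ℝ) + r)/((a + 2*r : ℕ):ℝ) := by
    field_simp
    push_cast
    ring
  have e2 : a + 2*r - r = a + r := by omega
  rw [e1, e2, div_pow, div_pow]
  rw [div_le_div_iff₀ (by positivity) (by positivity)]
  have e3 : ((a + 2*r : ℕ):ℝ) ^ (a + r) = ((a:ℝ) + 2*r) ^ a * ((a:ℝ)+2*r) ^ r := by
    push_cast
    rw [← pow_add]
  rw [e3]
  have := key0 a r hr
  calc (r:ℝ) ^ r * (((a:ℝ) + 2*r) ^ a * ((a:ℝ)+2*r) ^ r)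
      = (((a:ℝ) + 2*r) ^ a * (r:ℝ) ^ r) * ((a:ℝ)+2*r) ^ r := by ring
    _ ≤ ((a:ℝ) + r) ^ (a + r) * ((a:ℝ)+2*r) ^ r := by
        apply mul_le_mul_of_nonneg_right (key0 a r hr) (by positivity)
    _ = ((a:ℝ) + r) ^ (a + r) * ((a + 2*r : ℕ):ℝ) ^ r := by push_cast; ring

lemma measure_one {n : ℕ} {p : ℝ} :
    ∑ x : Fin n → ZMod 2, p ^ (wt x) * (1-p) ^ (n - wt x) = 1 := by
  have h : ∀ x : Fin n → ZMod 2, p ^ (wt x) * (1-p) ^ (n - wt x)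
      = ∏ i, (p ^ ((x i).val) * (1-p) ^ (1 - (x i).val)) := by
    intro x
    rw [Finset.prod_mul_distrib, Finset.prod_pow_eq_pow_sum, Finset.prod_pow_eq_pow_sum,
      sum_one_sub, ← wt]
  rw [Finset.sum_congr rfl fun x _ => h x,
    sum_prod_w (fun _ b => p ^ (b.val) * (1-p) ^ (1 - b.val))]
  have : ∀ _i : Fin n, p ^ ((0:ZMod 2).val) * (1-p) ^ (1 - (0:ZMod 2).val)
      + p ^ ((1:ZMod 2).val) * (1-p) ^ (1 - (1:ZMod 2).val) = 1 := by
    intro i; simp [ZMod.val_one]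
  rw [Finset.prod_congr rfl fun i _ => this i]
  simp

lemma card_wt_lt {n r : ℕ} (hr : 1 ≤ r) (h2r : 2*r ≤ n) :
    (((Finset.univ.filter (fun x : Fin n → ZMod 2 => wt x < r)).card : ℝ))
      ≤ ((n:ℝ)/r) ^ (2*r) := by
  have hn0 : (0:ℝ) < n := by
    have h' : 0 < n := by omega
    exact_mod_cast h'
  have hr0 : (0:ℝ) < r := by exact_mod_cast hr
  set p : ℝ := (r:ℝ)/n with hp
  have hp0 : 0 < p := by positivity
  have hp2 : p ≤ 1/2 := by
    rw [hp, div_le_div_iff₀ hn0 (by norm_num)]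
    have : (2*r : ℝ) ≤ n := by exact_mod_cast h2r
    linarith
  have hq0 : 0 < 1 - p := by linarith
  have hple : p ≤ 1 - p := by linarith
  set q : ℝ := p ^ r * (1-p) ^ (n-r) with hq
  have hqpos : 0 < q := by positivity
  have lower : ∀ x : Fin n → ZMod 2, wt x < r → q ≤ p ^ (wt x) * (1-p) ^ (n - wt x) := by
    intro x hx
    have hwn : wt x ≤ n := wt_le x
    have e1 : n - wt x = (r - wt x) + (n - r) := by omega
    have e2 : r = wt x + (r - wt x) := by omega
    calc q = p ^ (wt x) * p ^ (r - wt x) * (1-p) ^ (n-r) := by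
          rw [hq, ← pow_add, ← e2]
      _ ≤ p ^ (wt x) * (1-p) ^ (r - wt x) * (1-p) ^ (n-r) := by
          apply mul_le_mul_of_nonneg_right _ (by positivity)
          exact mul_le_mul_of_nonneg_left (pow_le_pow_left₀ hp0.le hple _) (by positivity)
      _ = p ^ (wt x) * (1-p) ^ (n - wt x) := by
          rw [mul_assoc, ← pow_add, ← e1]
  have hcard : ((Finset.univ.filter (fun x : Fin n → ZMod 2 => wt x < r)).card : ℝ) * q ≤ 1 := by
    calc ((Finset.univ.filter (fun x : Fin n → ZMod 2 => wt x < r)).card : ℝ) * q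
        = ∑ _x ∈ Finset.univ.filter (fun x : Fin n → ZMod 2 => wt x < r), q := by
          rw [Finset.sum_const, nsmul_eq_mul]
      _ ≤ ∑ x ∈ Finset.univ.filter (fun x : Fin n → ZMod 2 => wt x < r),
            p ^ (wt x) * (1-p) ^ (n - wt x) := by
          apply Finset.sum_le_sum
          intro x hx
          exact lower x (by simpa using hx)
      _ ≤ ∑ x : Fin n → ZMod 2, p ^ (wt x) * (1-p) ^ (n - wt x) := by
          apply Finset.sum_le_sum_of_subset_of_nonneg (Finset.filter_subset _ _)
          intro x _ _; positivity
      _ = 1 := measure_one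
  have step1 : ((Finset.univ.filter (fun x : Fin n → ZMod 2 => wt x < r)).card : ℝ)
      ≤ (1/p) ^ r * (1/(1-p)) ^ (n-r) := by
    rw [one_div_pow, one_div_pow, one_div_mul_one_div]
    exact (le_div_iff₀ hqpos).mpr hcard
  have step2 : (1/(1-p)) ^ (n-r) ≤ (1/p) ^ r := by
    rw [one_div_pow, one_div_pow]
    exact one_div_le_one_div_of_le (by positivity) (key1 hr h2r)
  have step3 : ((Finset.univ.filter (fun x : Fin n → ZMod 2 => wt x < r)).card : ℝ)
      ≤ (1/p) ^ (2*r) := by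
    calc _ ≤ (1/p) ^ r * (1/(1-p)) ^ (n-r) := step1
      _ ≤ (1/p) ^ r * (1/p) ^ r := mul_le_mul_of_nonneg_left step2 (by positivity)
      _ = (1/p) ^ (2*r) := by rw [← pow_add, two_mul]
  have : 1/p = (n:ℝ)/r := by rw [hp, one_div_div]
  rwa [this] at step3

lemma flip_val (b : ZMod 2) : (b + 1).val = 1 - b.val := by
  revert b; decide

lemma flip_flip' (b : ZMod 2) : b + 1 + 1 = b := by
  revert b; decide

lemma wt_flip {n : ℕ} (x : Fin n → ZMod 2) : wt (fun i => x i + 1) = n - wt x := by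
  unfold wt
  rw [Finset.sum_congr rfl fun i _ => flip_val (x i)]
  exact sum_one_sub x

lemma card_top {n r₁ : ℕ} :
    (Finset.univ.filter (fun x : Fin n → ZMod 2 => n < wt x + r₁)).card
      = (Finset.univ.filter (fun x : Fin n → ZMod 2 => wt x < r₁)).card := by
  apply Finset.card_nbij' (fun x => fun i => x i + 1) (fun x => fun i => x i + 1)
  · intro x hx
    simp only [Finset.coe_filter, Set.mem_setOf_eq, Finset.mem_univ, true_and] at hx ⊢
    rw [wt_flip]
    have := wt_le x
    omega
  · intro x hx
    simp only [Finset.coe_filter, Set.mem_setOf_eq, Finset.mem_univ, true_and] at hx ⊢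
    rw [wt_flip]
    have := wt_le x
    omega
  · intro x _; funext i; exact flip_flip' (x i)
  · intro x _; funext i; exact flip_flip' (x i)

lemma abs_fhat_le {n : ℕ} (h : (Fin n → ZMod 2) → ℝ) (S : Finset (Fin n)) :
    |fhat h S| ≤ (∑ x : Fin n → ZMod 2, |h x|) / 2 ^ n := by
  unfold fhat
  rw [abs_div, abs_of_pos (show (0:ℝ) < (2:ℝ)^n by positivity)]
  gcongr
  calc |∑ x : Fin n → ZMod 2, h x * (-1:ℝ)^(∑ i ∈ S, (x i).val)|
      ≤ ∑ x : Fin n → ZMod 2, |h x * (-1:ℝ)^(∑ i ∈ S, (x i).val)| :=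
        Finset.abs_sum_le_sum_abs _ _
    _ = ∑ x : Fin n → ZMod 2, |h x| := by
        apply Finset.sum_congr rfl; intro x _
        rw [abs_mul, abs_pow, abs_neg, abs_one, one_pow, mul_one]

lemma fhat_add {n : ℕ} (g h : (Fin n → ZMod 2) → ℝ) (S : Finset (Fin n)) :
    fhat (fun x => g x + h x) S = fhat g S + fhat h S := by
  simp only [fhat, add_mul, Finset.sum_add_distrib, add_div]

lemma wt_witness {n r₀ : ℕ} (h : r₀ ≤ n) :
    wt (fun i : Fin n => if (i : ℕ) < r₀ then (1 : ZMod 2) else 0) = r₀ := by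
  unfold wt
  have h1 : ∀ i : Fin n, ((if (i : ℕ) < r₀ then (1 : ZMod 2) else 0)).val
      = if (i : ℕ) < r₀ then 1 else 0 := by
    intro i; split <;> simp [ZMod.val_one]
  rw [Finset.sum_congr rfl fun i _ => h1 i, Finset.sum_boole, Nat.cast_id]
  have e : (Finset.filter (fun x : Fin n => (x:ℕ) < r₀) Finset.univ).card
      = (Finset.range r₀).card := by
    refine Finset.card_nbij (fun i => (i : ℕ)) ?_ ?_ ?_
    · intro a ha; simp only [Finset.coe_filter, Set.mem_setOf_eq] at ha; simp [ha.2]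
    · intro a _ b _ hab; exact Fin.val_injective hab
    · intro m hm
      simp only [Finset.coe_range, Set.mem_Iio] at hm
      exact ⟨⟨m, lt_of_lt_of_le hm h⟩, by simp [hm], rfl⟩
  rw [e, Finset.card_range]

lemma band_decomp {n r₀ r₁ : ℕ} (h01 : r₀ + r₁ ≤ n) (f : (Fin n → ZMod 2) → ℝ)
    (hbool : ∀ x, f x = 1 ∨ f x = -1) (hP : BandConst f r₀ r₁) :
    ∃ g : (Fin n → ZMod 2) → ℝ, (∀ x, r₀ ≤ wt x → wt x + r₁ ≤ n → f x = g x) ∧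
      (∀ x, |g x| = 1) ∧ (∑ S : Finset (Fin n), |fhat g S|) = 1 := by
  set x₀ : Fin n → ZMod 2 := fun i => if (i : ℕ) < r₀ then (1 : ZMod 2) else 0 with hx₀
  have hw₀ : wt x₀ = r₀ := wt_witness (by omega)
  have hb1 : r₀ ≤ wt x₀ := by omega
  have hb2 : wt x₀ + r₁ ≤ n := by omega
  rcases hP with ⟨c, hc⟩ | ⟨c, hc⟩
  · have habs : |c| = 1 := by
      rw [← hc x₀ hb1 hb2]
      rcases hbool x₀ with h | h <;> rw [h] <;> norm_num
    refine ⟨fun _ => c, hc, fun x => habs, ?_⟩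
    have h1 : ∀ S : Finset (Fin n), |fhat (fun _ => c) S| = if S = ∅ then |c| else 0 := by
      intro S; rw [fhat_const]; split <;> simp
    rw [Finset.sum_congr rfl fun S _ => h1 S, Finset.sum_ite_eq' Finset.univ ∅ fun _ => |c|]
    simp [habs]
  · have habs : |c| = 1 := by
      rw [← hc x₀ hb1 hb2, abs_mul, abs_pow, abs_neg, abs_one, one_pow, mul_one]
      rcases hbool x₀ with h | h <;> rw [h] <;> norm_num
    have hsq : ∀ k : ℕ, ((-1:ℝ) ^ k) * ((-1:ℝ) ^ k) = 1 := by
      intro k; rw [← pow_add]; exact Even.neg_one_pow ⟨k, rfl⟩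
    refine ⟨fun x => c * (-1:ℝ) ^ wt x, ?_, ?_, ?_⟩
    · intro x h1 h2
      have h3 := hc x h1 h2
      calc f x = f x * ((-1:ℝ) ^ wt x * (-1:ℝ) ^ wt x) := by rw [hsq]; ring
        _ = (f x * (-1:ℝ) ^ wt x) * (-1:ℝ) ^ wt x := by ring
        _ = c * (-1:ℝ) ^ wt x := by rw [h3]
    · intro x
      rw [abs_mul, abs_pow, abs_neg, abs_one, one_pow, mul_one, habs]
    · have h1 : ∀ S : Finset (Fin n), |fhat (fun x => c * (-1:ℝ) ^ wt x) S|
          = if S = Finset.univ then |c| else 0 := by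
        intro S; rw [fhat_parity]; split <;> simp
      rw [Finset.sum_congr rfl fun S _ => h1 S,
        Finset.sum_ite_eq' Finset.univ Finset.univ fun _ => |c|]
      simp [habs]

theorem spectral_norm_upper_bound {n r₀ r₁ : ℕ} (hn : 1 ≤ n) (f : (Fin n → ZMod 2) → ℝ)
    (hbool : ∀ x, f x = 1 ∨ f x = -1)
    (hsym : ∀ x y, wt x = wt y → f x = f y)
    (h0 : 2 * r₀ < n) (h1 : 2 * r₁ < n)
    (hP : BandConst f r₀ r₁)
    (hmin0 : ∀ r₀' < r₀, ¬ BandConst f r₀' r₁)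
    (hmin1 : ∀ r₁' < r₁, ¬ BandConst f r₀ r₁')
    (hr : 1 ≤ max r₀ r₁) :
    Real.logb 2 (∑ S : Finset (Fin n), |fhat f S|) ≤
      2 * (max r₀ r₁ : ℝ) * Real.logb 2 ((n : ℝ) / (max r₀ r₁ : ℝ)) + 3 := by
  rw [← Nat.cast_max]
  set r : ℕ := max r₀ r₁ with hrdef
  have h2r : 2 * r ≤ n := by omega
  have hrn : r ≤ n := by omega
  have hr0 : (0:ℝ) < (r:ℝ) := by exact_mod_cast hr
  have hn0 : (0:ℝ) < (n:ℝ) := by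
    have h' : 0 < n := hn
    exact_mod_cast h'
  have hdiv1 : (1:ℝ) ≤ (n:ℝ)/(r:ℝ) := by
    rw [le_div_iff₀ hr0]
    have : (r:ℝ) ≤ (n:ℝ) := by exact_mod_cast hrn
    linarith
  set B : ℝ := ((n:ℝ)/(r:ℝ)) ^ (2*r) with hBdef
  have hB1 : (1:ℝ) ≤ B := by
    calc (1:ℝ) = 1 ^ (2*r) := (one_pow _).symm
      _ ≤ ((n:ℝ)/(r:ℝ)) ^ (2*r) := pow_le_pow_left₀ zero_le_one hdiv1 _
  -- decomposition
  obtain ⟨g, hband, hgabs, hgsum⟩ := band_decomp (by omega) f hbool hP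
  set T : ℝ := ∑ S : Finset (Fin n), |fhat f S| with hTdef
  have hT0 : 0 ≤ T := Finset.sum_nonneg fun S _ => abs_nonneg _
  -- T ≤ 1 + ∑ |f - g|
  have hsplit : T ≤ 1 + ∑ x : Fin n → ZMod 2, |f x - g x| := by
    have hdec : ∀ S : Finset (Fin n), fhat f S = fhat g S + fhat (fun x => f x - g x) S := by
      intro S
      rw [← fhat_add]
      congr 1
      funext x; ring
    have h2n : ((2:ℝ) ^ n) ≠ 0 := by positivity
    calc T = ∑ S : Finset (Fin n), |fhat g S + fhat (fun x => f x - g x) S| := by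
          rw [hTdef]; exact Finset.sum_congr rfl fun S _ => by rw [hdec S]
      _ ≤ ∑ S : Finset (Fin n), (|fhat g S| + |fhat (fun x => f x - g x) S|) :=
          Finset.sum_le_sum fun S _ => abs_add_le _ _
      _ = 1 + ∑ S : Finset (Fin n), |fhat (fun x => f x - g x) S| := by
          rw [Finset.sum_add_distrib, hgsum]
      _ ≤ 1 + ∑ _S : Finset (Fin n), (∑ x : Fin n → ZMod 2, |f x - g x|) / 2 ^ n := by
          gcongr with S _
          exact abs_fhat_le _ S
      _ = 1 + ∑ x : Fin n → ZMod 2, |f x - g x| := by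
          rw [Finset.sum_const, Finset.card_univ, Fintype.card_finset, Fintype.card_fin,
            nsmul_eq_mul]
          push_cast
          rw [mul_div_cancel₀ _ h2n]
  -- support bound
  set Bad : Finset (Fin n → ZMod 2) :=
    Finset.univ.filter (fun x => wt x < r₀ ∨ n < wt x + r₁) with hBad
  have hsupp : ∑ x : Fin n → ZMod 2, |f x - g x| ≤ 2 * (Bad.card : ℝ) := by
    have hz : ∀ x ∈ Finset.univ, x ∉ Bad → |f x - g x| = 0 := by
      intro x _ hx
      simp only [hBad, Finset.mem_filter, Finset.mem_univ, true_and, not_or, not_lt] at hx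
      rw [hband x hx.1 (by omega), sub_self, abs_zero]
    calc ∑ x : Fin n → ZMod 2, |f x - g x| = ∑ x ∈ Bad, |f x - g x| :=
          (Finset.sum_subset (Finset.subset_univ Bad) hz).symm
      _ ≤ ∑ _x ∈ Bad, (2:ℝ) := by
          apply Finset.sum_le_sum
          intro x _
          calc |f x - g x| ≤ |f x| + |g x| := abs_sub _ _
            _ ≤ 2 := by
                have h1' : |f x| = 1 := by rcases hbool x with h | h <;> rw [h] <;> norm_num
                rw [h1', hgabs x]; norm_num
      _ = 2 * (Bad.card : ℝ) := by rw [Finset.sum_const, nsmul_eq_mul]; ring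
  -- card bound
  set C : ℕ := (Finset.univ.filter (fun x : Fin n → ZMod 2 => wt x < r)).card with hC
  have hcard : (Bad.card : ℝ) ≤ 2 * (C : ℝ) := by
    have hsub : Bad ⊆ (Finset.univ.filter (fun x : Fin n → ZMod 2 => wt x < r₀)) ∪
        (Finset.univ.filter (fun x : Fin n → ZMod 2 => n < wt x + r₁)) := by
      rw [← Finset.filter_or]
    have h2 : Bad.card ≤ (Finset.univ.filter (fun x : Fin n → ZMod 2 => wt x < r₀)).card
        + (Finset.univ.filter (fun x : Fin n → ZMod 2 => n < wt x + r₁)).card :=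
      le_trans (Finset.card_le_card hsub) (Finset.card_union_le _ _)
    have h3 : (Finset.univ.filter (fun x : Fin n → ZMod 2 => wt x < r₀)).card ≤ C := by
      apply Finset.card_le_card
      apply Finset.monotone_filter_right
      intro x _ hx; exact lt_of_lt_of_le hx (by omega)
    have h4 : (Finset.univ.filter (fun x : Fin n → ZMod 2 => n < wt x + r₁)).card ≤ C := by
      rw [card_top]
      apply Finset.card_le_card
      apply Finset.monotone_filter_right
      intro x _ hx; exact lt_of_lt_of_le hx (by omega)
    have : Bad.card ≤ 2 * C := by omega
    exact_mod_cast this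
  have hCB : (C : ℝ) ≤ B := card_wt_lt hr h2r
  -- total numeric bound
  have hTB : T ≤ 8 * B := by
    calc T ≤ 1 + ∑ x : Fin n → ZMod 2, |f x - g x| := hsplit
      _ ≤ 1 + 2 * (2 * (C:ℝ)) := by linarith
      _ ≤ 1 + 4 * B := by linarith
      _ ≤ 8 * B := by linarith
  -- logs
  have hRHS : Real.logb 2 (8 * B) = 2 * (r:ℝ) * Real.logb 2 ((n:ℝ)/(r:ℝ)) + 3 := by
    have hBne : B ≠ 0 := by positivity
    rw [Real.logb_mul (by norm_num) hBne, hBdef, Real.logb_pow]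
    have h8 : Real.logb 2 8 = 3 := by
      rw [show (8:ℝ) = 2 ^ (3:ℕ) by norm_num, Real.logb_pow,
        Real.logb_self_eq_one (by norm_num)]
      norm_num
    rw [h8]
    push_cast
    ring
  rw [← hRHS]
  rcases eq_or_lt_of_le hT0 with hT | hT
  · rw [← hT, Real.logb_zero]
    have hlogB : 0 ≤ Real.logb 2 (8*B) := Real.logb_nonneg one_lt_two (by linarith)
    exact hlogB
  · exact Real.logb_le_logb_of_le one_lt_two hT hTB
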